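/- For every server layout S = {s_1 < … < s_k} on the line, C(A*[S], S) holds: the PTCP algorithm A*[S] is faithful, surrounding-oriented, and satisfies condition (C3) with bound α(S). -/

import Mathlib

noncomputable section

namespace OFAL

/-! ### Basic model: servers are points of the real line, given as a `Finset ℝ`. -/

/-- Decrease the remaining capacity of server `m` by one. -/
def decCap (c : ℝ → ℕ) (m : ℝ) : ℝ → ℕ := fun x => if x = m then c x - 1 else c x

/-- Remaining capacities after a list of matches. -/
def useCaps : (ℝ → ℕ) → List ℝ → (ℝ → ℕ)
  | c, [] => c
  | c, m :: ms => useCaps (decCap c m) ms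

/-- The set of servers that are still free. -/
def freeOf (S : Finset ℝ) (c : ℝ → ℕ) : Finset ℝ := S.filter fun x => 0 < c x

/-- Run an algorithm given by a choice function `f` (mapping the position of the
current request and the current set of free servers to the chosen server)
on a request sequence, producing the list of matched servers. -/
def runC (S : Finset ℝ) (f : ℝ → Finset ℝ → ℝ) : (ℝ → ℕ) → List ℝ → List ℝ
  | _, [] => []
  | c, r :: rs => f r (freeOf S c) :: runC S f (decCap c (f r (freeOf S c))) rs

/-- The server with which the algorithm matches the `i`-th request (0-indexed). -/
def mtch (S : Finset ℝ) (f : ℝ → Finset ℝ → ℝ) (c : ℝ → ℕ) (σ : List ℝ) (i : ℕ) : ℝ :=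
  (runC S f c σ).getD i 0

/-- Total cost incurred by the algorithm on a request sequence. -/
def algCost (S : Finset ℝ) (f : ℝ → Finset ℝ → ℝ) (c : ℝ → ℕ) (σ : List ℝ) : ℝ :=
  ((σ.zip (runC S f c σ)).map fun p => |p.1 - p.2|).sum

def totalCap (S : Finset ℝ) (c : ℝ → ℕ) : ℕ := ∑ x ∈ S, c x

/-- A valid request sequence: at most as many requests as total capacity. -/
def ValidSeq (S : Finset ℝ) (c : ℝ → ℕ) (σ : List ℝ) : Prop := σ.length ≤ totalCap S c

/-- A valid (offline) assignment of requests to servers. -/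
def ValidAssign (S : Finset ℝ) (c : ℝ → ℕ) (σ : List ℝ) (m : ℕ → ℝ) : Prop :=
  (∀ i < σ.length, m i ∈ S) ∧
  ∀ x ∈ S, ((List.range σ.length).filter fun i => m i = x).length ≤ c x

def assignCost (σ : List ℝ) (m : ℕ → ℝ) : ℝ :=
  ∑ i ∈ Finset.range σ.length, |σ.getD i 0 - m i|

/-- Cost of an optimal offline assignment. -/
def Opt (S : Finset ℝ) (c : ℝ → ℕ) (σ : List ℝ) : ℝ :=
  sInf { t | ∃ m, ValidAssign S c σ m ∧ assignCost σ m = t }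

/-- Unit capacities. -/
def c1 : ℝ → ℕ := fun _ => 1

/-- The set of servers still free after the first `t` matches of `ms`. -/
def freeAfter (S : Finset ℝ) (c : ℝ → ℕ) (ms : List ℝ) (t : ℕ) : Finset ℝ :=
  S.filter fun x => (ms.take t).count x < c x

/-! ### MPFS algorithms -/

/-- A choice function is an MPFS algorithm if it is given by a family of linear
orders (priorities, encoded by an injective rank function) on the servers, one for
each request position, and selects the free server with the highest priority. -/
def IsMPFS (S : Finset ℝ) (f : ℝ → Finset ℝ → ℝ) : Prop :=
  ∃ rank : ℝ → ℝ → ℕ,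
    (∀ r : ℝ, Set.InjOn (rank r) (S : Set ℝ)) ∧
    ∀ (r : ℝ) (F : Finset ℝ), F ⊆ S → F.Nonempty →
      f r F ∈ F ∧ ∀ y ∈ F, rank r (f r F) ≤ rank r y

/-! ### Geometry of the server layout -/

/-- `a` and `b` are adjacent servers of `T` with `a < b`. -/
def IsGapPair (T : Finset ℝ) (a b : ℝ) : Prop :=
  a ∈ T ∧ b ∈ T ∧ a < b ∧ ∀ x ∈ T, x ≤ a ∨ b ≤ x

/-- The maximum distance between two adjacent servers. -/
def maxGap (T : Finset ℝ) : ℝ := sSup { d | ∃ a b, IsGapPair T a b ∧ d = b - a }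

/-- The minimum distance between two adjacent servers. -/
def minGap (T : Finset ℝ) : ℝ := sInf { d | ∃ a b, IsGapPair T a b ∧ d = b - a }

/-- `L(T)`: the ratio of the diameter of `T` to its maximum gap (0 if `|T| ≤ 1`). -/
def Lval (T : Finset ℝ) : ℝ :=
  if 2 ≤ T.card then (sSup (T : Set ℝ) - sInf (T : Set ℝ)) / maxGap T else 0

/-- `α(S) = max_{T ⊆ S} L(T)`. -/
def alpha (S : Finset ℝ) : ℝ :=
  (S.powerset.image Lval).max'
    ⟨Lval ∅, Finset.mem_image_of_mem _ (Finset.empty_mem_powerset S)⟩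

/-- The aspect ratio `U(S)`: diameter over minimum gap. -/
def Uval (S : Finset ℝ) : ℝ := (sSup (S : Set ℝ) - sInf (S : Set ℝ)) / minGap S

/-! ### Surrounding servers -/

/-- `x` is a surrounding server of a request at `r` among the free servers `F`. -/
def IsSurrounding (F : Finset ℝ) (r x : ℝ) : Prop :=
  x ∈ F ∧
    (if r ∈ F then x = r
     else (x < r ∧ ∀ y ∈ F, y ≤ x ∨ r < y) ∨ (r < x ∧ ∀ y ∈ F, y < r ∨ x ≤ y))

/-- No element of `F` lies strictly between `u` and `v`. -/
def NoFreeBetween (F : Finset ℝ) (u v : ℝ) : Prop :=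
  ∀ y ∈ F, ¬ (min u v < y ∧ y < max u v)

/-- A choice-function algorithm is surrounding-oriented if on every request
sequence it matches every request with one of its surrounding servers. -/
def SurrOriented (S : Finset ℝ) (f : ℝ → Finset ℝ → ℝ) : Prop :=
  ∀ (c : ℝ → ℕ) (σ : List ℝ), ValidSeq S c σ → ∀ i < σ.length,
    IsSurrounding (freeAfter S c (runC S f c σ) i) (σ.getD i 0) (mtch S f c σ i)

/-! ### Faithful algorithms -/

/-- `τ` is closer than `σ` with respect to the algorithm. -/
def Closer (S : Finset ℝ) (f : ℝ → Finset ℝ → ℝ) (c : ℝ → ℕ) (σ τ : List ℝ) : Prop :=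
  τ.length = σ.length ∧
  (∀ i < σ.length, τ.getD i 0 ∈ Set.uIcc (σ.getD i 0) (mtch S f c σ i)) ∧
  ∃ i < σ.length, |τ.getD i 0 - mtch S f c σ i| < |σ.getD i 0 - mtch S f c σ i|

/-- A faithful algorithm matches a closer request sequence with the same servers. -/
def FaithfulC (S : Finset ℝ) (f : ℝ → Finset ℝ → ℝ) : Prop :=
  ∀ (c : ℝ → ℕ) (σ τ : List ℝ), ValidSeq S c σ → Closer S f c σ τ →
    ∀ i < σ.length, mtch S f c τ i = mtch S f c σ i

/-- `σ` is opposite w.r.t. the algorithm: there is an optimal assignment `m` such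
that every request lies between its online server and its offline server. -/
def OppositeC (S : Finset ℝ) (f : ℝ → Finset ℝ → ℝ) (c : ℝ → ℕ) (σ : List ℝ) : Prop :=
  ∃ m : ℕ → ℝ, ValidAssign S c σ m ∧ assignCost σ m = Opt S c σ ∧
    ∀ i < σ.length, σ.getD i 0 ∈ Set.uIcc (mtch S f c σ i) (m i)

/-! ### Hybrid algorithms (unit capacities) -/

/-- The list of matches of the hybrid algorithm `H_{i,s}` (with `i` 1-indexed):
the first `i-1` requests are matched as by the algorithm, the `i`-th is matched
with `s`, and the rest are matched by the algorithm's choice function. -/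
def hybridRun (S : Finset ℝ) (f : ℝ → Finset ℝ → ℝ) (c : ℝ → ℕ)
    (σ : List ℝ) (i : ℕ) (s : ℝ) : List ℝ :=
  runC S f c (σ.take (i-1)) ++
    s :: runC S f (decCap (useCaps c (runC S f c (σ.take (i-1)))) s) (σ.drop i)

/-- The data produced by the singleton-difference lemma for the hybrid `H_{i,s}`:
for `i ≤ t ≤ t*` the free sets of `A` and of `H_{i,s}` differ exactly by the
singletons `{a t}` and `{h t}`, and they agree for `t ≥ t* + 1`. -/
def HybridData (S : Finset ℝ) (f : ℝ → Finset ℝ → ℝ) (σ : List ℝ)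
    (i : ℕ) (s : ℝ) (tstar : ℕ) (a h : ℕ → ℝ) : Prop :=
  i ≤ tstar ∧ tstar + 1 ≤ S.card ∧
  a i = s ∧ h i = mtch S f c1 σ (i-1) ∧
  (∀ t, i ≤ t → t ≤ tstar →
    freeAfter S c1 (runC S f c1 σ) t \ freeAfter S c1 (hybridRun S f c1 σ i s) t = {a t} ∧
    freeAfter S c1 (hybridRun S f c1 σ i s) t \ freeAfter S c1 (runC S f c1 σ) t = {h t}) ∧
  ∀ t, tstar + 1 ≤ t →
    freeAfter S c1 (runC S f c1 σ) t = freeAfter S c1 (hybridRun S f c1 σ i s) t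

/-! ### The condition `C(A,T)` -/

/-- Condition (C3). -/
def C3 (S : Finset ℝ) (f : ℝ → Finset ℝ → ℝ) : Prop :=
  2 ≤ S.card →
  ∀ σ : List ℝ, σ.length = S.card →
  ∀ i, 1 ≤ i → i ≤ S.card →
  ∀ s ∈ freeAfter S c1 (runC S f c1 σ) (i-1),
    s ≠ mtch S f c1 σ (i-1) →
    (IsSurrounding (freeAfter S c1 (runC S f c1 σ) (i-1)) (σ.getD (i-1) 0) s ∨
      ((∃! x, IsSurrounding (freeAfter S c1 (runC S f c1 σ) (i-1)) (σ.getD (i-1) 0) x) ∧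
        NoFreeBetween (freeAfter S c1 (runC S f c1 σ) (i-1)) s (mtch S f c1 σ (i-1)))) →
    ∀ tstar a h, HybridData S f σ i s tstar a h →
      |h tstar - σ.getD (i-1) 0| ≤ alpha S * |σ.getD (i-1) 0 - a i|

/-- The condition `C(A,S)`: faithful, surrounding-oriented, and (C3). -/
def CProp (S : Finset ℝ) (f : ℝ → Finset ℝ → ℝ) : Prop :=
  FaithfulC S f ∧ SurrOriented S f ∧ C3 S f

/-! ### The PTCP algorithm -/

/-- The critical point offset `x = D(Δ₂+D)/(Δ₁+Δ₂+2D)`. -/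
def ptcpX (S : Finset ℝ) (sa sb : ℝ) : ℝ :=
  (sb - sa) * ((sSup (S : Set ℝ) - sb) + (sb - sa)) /
    ((sa - sInf (S : Set ℝ)) + (sSup (S : Set ℝ) - sb) + 2 * (sb - sa))

/-- `IsPTCP S f` holds iff `f` behaves (on nonempty sets of free servers of `S`)
like the recursively defined algorithm PTCP: split `S` at (some) maximum gap
`(sa, sb)` into `S₁` and `S₂`, requests at most `sa + x` preferring `S₁`,
requests beyond preferring `S₂`. -/
inductive IsPTCP : Finset ℝ → (ℝ → Finset ℝ → ℝ) → Prop
  | single (s : ℝ) (f : ℝ → Finset ℝ → ℝ)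
      (h : ∀ (r : ℝ) (F : Finset ℝ), F ⊆ ({s} : Finset ℝ) → F.Nonempty → f r F = s) :
      IsPTCP {s} f
  | split (S : Finset ℝ) (f f₁ f₂ : ℝ → Finset ℝ → ℝ) (sa sb : ℝ)
      (hcard : 2 ≤ S.card) (hsa : sa ∈ S) (hsb : sb ∈ S) (hlt : sa < sb)
      (hadj : ∀ x ∈ S, x ≤ sa ∨ sb ≤ x)
      (hmax : sb - sa = maxGap S)
      (h1 : IsPTCP (S.filter (· ≤ sa)) f₁)
      (h2 : IsPTCP (S.filter (sb ≤ ·)) f₂)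
      (hf : ∀ (r : ℝ) (F : Finset ℝ), F ⊆ S → F.Nonempty →
        f r F =
          if ¬(F.filter (sb ≤ ·)).Nonempty ∨
             (r ≤ sa + ptcpX S sa sb ∧ (F.filter (· ≤ sa)).Nonempty)
          then f₁ r (F.filter (· ≤ sa))
          else f₂ r (F.filter (sb ≤ ·))) :
      IsPTCP S f

/-! ### The extended algorithm `A_{d,x}` -/

/-- The algorithm `A_{d,x}`: requests at most `sk + x` are served by `A` on `S`
(except when all of `S` is full, then by `s_{k+1}`), requests beyond `sk + x`
are served by `s_{k+1}` (except when it is full, then by `A` on `S`). -/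
def extChoice (S : Finset ℝ) (f : ℝ → Finset ℝ → ℝ) (sk skp1 x : ℝ) :
    ℝ → Finset ℝ → ℝ :=
  fun r F =>
    if r ≤ sk + x then
      (if (F ∩ S).Nonempty then f r (F ∩ S) else skp1)
    else
      (if skp1 ∈ F then skp1 else f r (F ∩ S))

/-! ### General deterministic online algorithms -/

/-- The server with which the online algorithm `A` (which sees the requests
processed so far and the current request) matches the `i`-th request (0-indexed). -/
def omatch (A : List ℝ → ℝ → ℝ) (σ : List ℝ) (i : ℕ) : ℝ := A (σ.take i) (σ.getD i 0)

def ocost (A : List ℝ → ℝ → ℝ) (σ : List ℝ) : ℝ :=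
  ∑ i ∈ Finset.range σ.length, |σ.getD i 0 - omatch A σ i|

/-- The set of servers free for the online algorithm just before the `i`-th request. -/
def ofree (S : Finset ℝ) (c : ℝ → ℕ) (A : List ℝ → ℝ → ℝ) (σ : List ℝ) (i : ℕ) :
    Finset ℝ :=
  S.filter fun x => ((List.range i).filter fun j => omatch A σ j = x).length < c x

/-- `A` is a (correct) deterministic online algorithm for `OFAL(S,c)`:
it always matches a request with a free server. -/
def IsOnline (S : Finset ℝ) (c : ℝ → ℕ) (A : List ℝ → ℝ → ℝ) : Prop :=
  ∀ σ : List ℝ, ValidSeq S c σ → ∀ i < σ.length, omatch A σ i ∈ ofree S c A σ i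

def OSurrOriented (S : Finset ℝ) (c : ℝ → ℕ) (A : List ℝ → ℝ → ℝ) : Prop :=
  ∀ σ : List ℝ, ValidSeq S c σ → ∀ i < σ.length,
    IsSurrounding (ofree S c A σ i) (σ.getD i 0) (omatch A σ i)

def OCloser (A : List ℝ → ℝ → ℝ) (σ τ : List ℝ) : Prop :=
  τ.length = σ.length ∧
  (∀ i < σ.length, τ.getD i 0 ∈ Set.uIcc (σ.getD i 0) (omatch A σ i)) ∧
  ∃ i < σ.length, |τ.getD i 0 - omatch A σ i| < |σ.getD i 0 - omatch A σ i|

def OFaithful (S : Finset ℝ) (c : ℝ → ℕ) (A : List ℝ → ℝ → ℝ) : Prop :=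
  ∀ σ τ : List ℝ, ValidSeq S c σ → OCloser A σ τ →
    ∀ i < σ.length, omatch A τ i = omatch A σ i

def OOpposite (S : Finset ℝ) (c : ℝ → ℕ) (A : List ℝ → ℝ → ℝ) (σ : List ℝ) : Prop :=
  ∃ m : ℕ → ℝ, ValidAssign S c σ m ∧ assignCost σ m = Opt S c σ ∧
    ∀ i < σ.length, σ.getD i 0 ∈ Set.uIcc (omatch A σ i) (m i)

/-- `Rate(σ) = A(σ)/Opt(σ)`, with the conventions for `Opt(σ) = 0`. -/
def Rate (S : Finset ℝ) (c : ℝ → ℕ) (A : List ℝ → ℝ → ℝ) (σ : List ℝ) : EReal :=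
  if 0 < Opt S c σ then (((ocost A σ) / Opt S c σ : ℝ) : EReal)
  else if 0 < ocost A σ then ⊤ else 1

/-! ### The permutation algorithm -/

/-- An execution of the permutation algorithm on `σ`, producing matches `p`:
there is a chain of minimum-cost assignments of the prefixes whose used server
multisets grow one server at a time, `p i` being the server added at step `i`. -/
def PermExec (S : Finset ℝ) (c : ℝ → ℕ) (σ : List ℝ) (p : ℕ → ℝ) : Prop :=
  ∃ M : ℕ → ℕ → ℝ,
    (∀ i ≤ σ.length,
      ValidAssign S c (σ.take i) (M i) ∧
      assignCost (σ.take i) (M i) = Opt S c (σ.take i)) ∧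
    ∀ i < σ.length,
      (((List.range (i+1)).map (M (i+1)) : List ℝ) : Multiset ℝ) =
        p i ::ₘ (((List.range i).map (M i) : List ℝ) : Multiset ℝ)

def execCost (σ : List ℝ) (p : ℕ → ℝ) : ℝ :=
  ∑ i ∈ Finset.range σ.length, |σ.getD i 0 - p i|

/-!
By induction over the recursion, every PTCP choice is a surrounding server, and moving a request
towards its server changes neither the side of the split it is sent to nor the choice within that
side; this gives faithfulness and surrounding orientation.

For (C3), the algorithm and the hybrid `H_{i,s}` run coupled, their free sets differing in one
server each, until they merge. At the top split at the maximal gap `(sa, sb)`: if `s` and the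
algorithm's server lie on the same side, the coupled runs project to coupled runs of that side's
PTCP, and induction applies since `α` is monotone. If they lie on opposite sides, the server only
the hybrid has free never leaves the side of the algorithm's server, and the critical point
`sa + x` is exactly where `L(S)` times the distance from the request to the near end of the gap
equals its distance to the far end of `S`.
-/

section Runs

variable {S : Finset ℝ} {f : ℝ → Finset ℝ → ℝ}

lemma useCaps_apply (c : ℝ → ℕ) (ms : List ℝ) (x : ℝ) :
    useCaps c ms x = c x - ms.count x := by
  induction ms generalizing c with
  | nil => simp [useCaps]
  | cons m ms ih =>
    simp only [useCaps, ih, decCap, List.count_cons]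
    rcases eq_or_ne x m with rfl | h
    · simp; omega
    · simp [h, h.symm]

lemma useCaps_append (c : ℝ → ℕ) (l₁ l₂ : List ℝ) :
    useCaps c (l₁ ++ l₂) = useCaps (useCaps c l₁) l₂ := by
  induction l₁ generalizing c with
  | nil => rfl
  | cons m ms ih => exact ih _

lemma runC_length (c : ℝ → ℕ) (σ : List ℝ) : (runC S f c σ).length = σ.length := by
  induction σ generalizing c with
  | nil => rfl
  | cons r rs ih => simp [runC, ih]

lemma freeAfter_eq_freeOf (c : ℝ → ℕ) (ms : List ℝ) (t : ℕ) :
    freeAfter S c ms t = freeOf S (useCaps c (ms.take t)) := by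
  refine Finset.filter_congr fun x _ => ?_
  rw [useCaps_apply]
  omega

lemma freeAfter_zero (c : ℝ → ℕ) (ms : List ℝ) : freeAfter S c ms 0 = freeOf S c := by
  simp [freeAfter_eq_freeOf, useCaps]

lemma freeAfter_cons (c : ℝ → ℕ) (m : ℝ) (ms : List ℝ) (t : ℕ) :
    freeAfter S c (m :: ms) (t + 1) = freeAfter S (decCap c m) ms t := by
  simp [freeAfter_eq_freeOf, useCaps]

lemma freeAfter_append (c : ℝ → ℕ) (l₁ l₂ : List ℝ) (t : ℕ) :
    freeAfter S c (l₁ ++ l₂) (l₁.length + t) = freeAfter S (useCaps c l₁) l₂ t := by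
  rw [freeAfter_eq_freeOf, freeAfter_eq_freeOf, List.take_length_add_append, useCaps_append]

lemma runC_getD (c : ℝ → ℕ) (σ : List ℝ) {t : ℕ} (ht : t < σ.length) :
    (runC S f c σ).getD t 0 = f (σ.getD t 0) (freeAfter S c (runC S f c σ) t) := by
  induction σ generalizing c t with
  | nil => simp at ht
  | cons r rs ih =>
    cases t with
    | zero => simp [runC, freeAfter_zero]
    | succ t => simpa [runC, freeAfter_cons] using ih _ (by simpa using ht)

lemma totalCap_decCap {c : ℝ → ℕ} {m : ℝ} (hm : m ∈ S) (hc : 0 < c m) :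
    totalCap S c = totalCap S (decCap c m) + 1 := by
  have hrest : ∑ x ∈ S.erase m, decCap c m x = ∑ x ∈ S.erase m, c x :=
    Finset.sum_congr rfl fun x hx => by simp [decCap, Finset.ne_of_mem_erase hx]
  unfold totalCap
  rw [← Finset.sum_erase_add S c hm, ← Finset.sum_erase_add S (decCap c m) hm, hrest]
  simp only [decCap, if_pos]
  omega

lemma freeOf_nonempty {c : ℝ → ℕ} (h : 0 < totalCap S c) : (freeOf S c).Nonempty := by
  obtain ⟨x, hxS, hx⟩ := Finset.exists_ne_zero_of_sum_ne_zero h.ne'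
  exact ⟨x, Finset.mem_filter.mpr ⟨hxS, Nat.pos_of_ne_zero hx⟩⟩

end Runs

section ChoosingFree

variable {S : Finset ℝ} {f : ℝ → Finset ℝ → ℝ}
  (hmem : ∀ r F, F ⊆ S → F.Nonempty → f r F ∈ F)
include hmem

lemma totalCap_decCap_choice {c : ℝ → ℕ} (hc : 0 < totalCap S c) (r : ℝ) :
    totalCap S c = totalCap S (decCap c (f r (freeOf S c))) + 1 :=
  have hm := Finset.mem_filter.mp (hmem r _ (Finset.filter_subset _ _) (freeOf_nonempty hc))
  totalCap_decCap hm.1 hm.2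

lemma freeAfter_runC_nonempty (c : ℝ → ℕ) (σ : List ℝ) (hσ : σ.length ≤ totalCap S c)
    {i : ℕ} (hi : i < σ.length) : (freeAfter S c (runC S f c σ) i).Nonempty := by
  induction σ generalizing c i with
  | nil => simp at hi
  | cons r rs ih =>
    have hc : 0 < totalCap S c := lt_of_lt_of_le (by simp) hσ
    cases i with
    | zero => simpa [runC, freeAfter_zero] using freeOf_nonempty hc
    | succ i =>
      rw [runC, freeAfter_cons]
      have := totalCap_decCap_choice hmem hc r
      exact ih _ (by simp at hσ; omega) (by simpa using hi)

lemma runC_eq_of_mem_uIcc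
    (hstable : ∀ r q F, F ⊆ S → F.Nonempty → q ∈ Set.uIcc r (f r F) → f q F = f r F)
    (c : ℝ → ℕ) (σ τ : List ℝ) (hσ : σ.length ≤ totalCap S c) (hlen : τ.length = σ.length)
    (hτ : ∀ i < σ.length, τ.getD i 0 ∈ Set.uIcc (σ.getD i 0) ((runC S f c σ).getD i 0)) :
    runC S f c τ = runC S f c σ := by
  induction σ generalizing c τ with
  | nil => simp_all
  | cons r rs ih =>
    obtain _ | ⟨q, qs⟩ := τ
    · simp at hlen
    have hc : 0 < totalCap S c := lt_of_lt_of_le (by simp) hσ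
    have hq : f q (freeOf S c) = f r (freeOf S c) :=
      hstable r q _ (Finset.filter_subset _ _) (freeOf_nonempty hc) (by simpa [runC] using hτ 0)
    have := totalCap_decCap_choice hmem hc r
    rw [runC, runC, hq, ih _ qs (by simp at hσ; omega) (by simpa using hlen)
      fun i hi => by simpa [runC] using hτ (i + 1) (by simpa using hi)]

end ChoosingFree

section UnitCapacity

variable {S : Finset ℝ} {f : ℝ → Finset ℝ → ℝ}

lemma freeOf_decCap_of_le_one {c : ℝ → ℕ} {s : ℝ} (hc : c s ≤ 1) :
    freeOf S (decCap c s) = (freeOf S c).erase s := by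
  ext x
  rw [freeOf, freeOf, Finset.mem_erase, Finset.mem_filter, Finset.mem_filter, decCap]
  rcases eq_or_ne x s with rfl | hxs
  · simp; omega
  · simp [hxs]

lemma freeAfter_c1_succ (ms : List ℝ) {t : ℕ} (ht : t < ms.length) :
    freeAfter S c1 ms (t + 1) = (freeAfter S c1 ms t).erase (ms.getD t 0) := by
  rw [freeAfter_eq_freeOf, freeAfter_eq_freeOf, List.take_add_one, useCaps_append,
    List.getElem?_eq_getElem ht, Option.toList_some, List.getD_eq_getElem _ _ ht]
  exact freeOf_decCap_of_le_one (by rw [useCaps_apply]; simp [c1])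

lemma freeAfter_runC_c1_succ (σ : List ℝ) {t : ℕ} (ht : t < σ.length) :
    freeAfter S c1 (runC S f c1 σ) (t + 1) =
      (freeAfter S c1 (runC S f c1 σ) t).erase
        (f (σ.getD t 0) (freeAfter S c1 (runC S f c1 σ) t)) := by
  rw [freeAfter_c1_succ _ (by rwa [runC_length]), runC_getD c1 σ ht]

end UnitCapacity

section Hybrid

variable {S : Finset ℝ} {f : ℝ → Finset ℝ → ℝ} {c : ℝ → ℕ} {σ : List ℝ} {i : ℕ} {s : ℝ}

lemma hybridRun_eq_append :
    hybridRun S f c σ i s =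
      (runC S f c (σ.take (i - 1)) ++ [s]) ++
        runC S f (useCaps c (runC S f c (σ.take (i - 1)) ++ [s])) (σ.drop i) := by
  rw [useCaps_append, List.append_assoc, List.singleton_append]
  rfl

lemma hybridRun_getD (hi : 1 ≤ i) {t : ℕ} (hit : i ≤ t) (ht : t < σ.length) :
    (hybridRun S f c σ i s).getD t 0 =
      f (σ.getD t 0) (freeAfter S c (hybridRun S f c σ i s) t) := by
  set P := runC S f c (σ.take (i - 1)) ++ [s]
  have hP : P.length = i := by simp [P, runC_length]; omega
  have hdrop : (σ.drop i).getD (t - i) 0 = σ.getD t 0 := by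
    simp only [List.getD_eq_getElem?_getD, List.getElem?_drop, Nat.add_sub_cancel' hit]
  rw [hybridRun_eq_append, List.getD_append_right _ _ _ _ (by simp [runC_length]; omega), hP,
    runC_getD _ _ (by simp; omega), hdrop, ← freeAfter_append, hP, Nat.add_sub_cancel' hit]

lemma freeAfter_hybridRun_c1_succ (hi : 1 ≤ i) (hiσ : i ≤ σ.length) {t : ℕ} (hit : i ≤ t)
    (ht : t < σ.length) :
    freeAfter S c1 (hybridRun S f c1 σ i s) (t + 1) =
      (freeAfter S c1 (hybridRun S f c1 σ i s) t).erase
        (f (σ.getD t 0) (freeAfter S c1 (hybridRun S f c1 σ i s) t)) := by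
  have hlen : (hybridRun S f c1 σ i s).length = σ.length := by
    simp [hybridRun, runC_length]; omega
  rw [freeAfter_c1_succ _ (by omega), hybridRun_getD hi hit ht]

end Hybrid

namespace IsSurrounding

variable {F E : Finset ℝ} {r q x y a : ℝ}

lemma eq_of_mem (hx : IsSurrounding F r x) (hr : r ∈ F) : x = r := by
  simpa [IsSurrounding, hr] using hx.2

lemma of_filter {p : ℝ → Prop} [DecidablePred p] (hx : IsSurrounding (F.filter p) r x)
    (hout : ∀ y ∈ F, ¬ p y → max r x < y ∨ y < min r x) : IsSurrounding F r x := by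
  obtain ⟨hxE, hcond⟩ := hx
  refine ⟨(Finset.mem_filter.mp hxE).1, ?_⟩
  have hbeyond : ∀ y ∈ F, ¬ p y → (r < y ∧ x ≤ y) ∨ (y < r ∧ y ≤ x) := fun y hy hpy => by
    rcases hout y hy hpy with h | h
    · exact Or.inl ⟨(le_max_left r x).trans_lt h, ((le_max_right r x).trans_lt h).le⟩
    · exact Or.inr ⟨h.trans_le (min_le_left r x), (h.trans_le (min_le_right r x)).le⟩
  by_cases hr : r ∈ F
  · have hpr : p r := by_contra fun hpr => by rcases hbeyond r hr hpr with h | h <;> simp at h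
    rw [if_pos (Finset.mem_filter.mpr ⟨hr, hpr⟩)] at hcond
    rwa [if_pos hr]
  · rw [if_neg hr]
    rw [if_neg fun h => hr (Finset.mem_filter.mp h).1] at hcond
    have hmem : ∀ y ∈ F, p y → y ∈ F.filter p := fun y hy hpy => Finset.mem_filter.mpr ⟨hy, hpy⟩
    rcases hcond with ⟨hxr, hy⟩ | ⟨hrx, hy⟩
    · refine Or.inl ⟨hxr, fun y hyF => ?_⟩
      by_cases hpy : p y
      · exact hy y (hmem y hyF hpy)
      · rcases hbeyond y hyF hpy with h | h
        · exact Or.inr h.1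
        · exact Or.inl h.2
    · refine Or.inr ⟨hrx, fun y hyF => ?_⟩
      by_cases hpy : p y
      · exact hy y (hmem y hyF hpy)
      · rcases hbeyond y hyF hpy with h | h
        · exact Or.inr h.2
        · exact Or.inl h.1

lemma noFreeBetween (hx : IsSurrounding F r x) (hy : IsSurrounding F r y) (hxy : x ≠ y) :
    NoFreeBetween F x y := by
  obtain ⟨hxF, hx⟩ := hx
  obtain ⟨hyF, hy⟩ := hy
  intro z hzF hz
  rw [min_lt_iff, lt_max_iff] at hz
  by_cases hr : r ∈ F
  · rw [if_pos hr] at hx hy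
    exact hxy (hx.trans hy.symm)
  rw [if_neg hr] at hx hy
  rcases hx with ⟨hxr, hx⟩ | ⟨hrx, hx⟩ <;> rcases hy with ⟨hyr, hy⟩ | ⟨hry, hy⟩
  · rcases hx y hyF with h | h <;> rcases hy x hxF with h' | h'
    exacts [hxy (le_antisymm h' h), by linarith, by linarith, by linarith]
  · rcases hx z hzF with h | h <;> rcases hy z hzF with h' | h' <;>
      rcases hz with ⟨h1 | h1, h2 | h2⟩ <;> linarith
  · rcases hx z hzF with h | h <;> rcases hy z hzF with h' | h' <;>
      rcases hz with ⟨h1 | h1, h2 | h2⟩ <;> linarith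
  · rcases hx y hyF with h | h <;> rcases hy x hxF with h' | h'
    exacts [by linarith, by linarith, by linarith, hxy (le_antisymm h h')]

lemma le_of_forall_lt (hx : IsSurrounding E q x) (hq : ∀ y ∈ E, y < q) : ∀ y ∈ E, y ≤ x := by
  obtain ⟨hxE, hx⟩ := hx
  rw [if_neg fun h => (hq q h).false] at hx
  rcases hx with ⟨_, hy⟩ | ⟨hqx, _⟩
  · exact fun y hyE => (hy y hyE).resolve_right (hq y hyE).not_gt
  · exact absurd (hq x hxE) hqx.not_gt

lemma ge_of_forall_gt (hx : IsSurrounding E q x) (hq : ∀ y ∈ E, q < y) : ∀ y ∈ E, x ≤ y := by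
  obtain ⟨hxE, hx⟩ := hx
  rw [if_neg fun h => (hq q h).false] at hx
  rcases hx with ⟨hxq, _⟩ | ⟨_, hy⟩
  · exact absurd (hq x hxE) hxq.not_gt
  · exact fun y hyE => (hy y hyE).resolve_left (hq y hyE).not_gt

lemma eq_of_isGreatest (hx : IsSurrounding E q x) (ha : IsGreatest (E : Set ℝ) a) (hq : a < q) :
    x = a :=
  le_antisymm (ha.2 hx.1) (hx.le_of_forall_lt (fun _ hy => (ha.2 hy).trans_lt hq) a ha.1)

lemma eq_of_isLeast (hx : IsSurrounding E q x) (ha : IsLeast (E : Set ℝ) a) (hq : q < a) :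
    x = a :=
  le_antisymm (hx.ge_of_forall_gt (fun _ hy => hq.trans_le (ha.2 hy)) a ha.1) (ha.2 hx.1)

/-- Choosing the top element `a` of `insert a E` forces the request to lie above all of `E`. -/
lemma le_of_isSurrounding_insert_top (ha : IsSurrounding (insert a E) q a) (haE : a ∉ E)
    (hub : ∀ y ∈ E, y ≤ a) (hx : IsSurrounding E q x) : ∀ y ∈ E, y ≤ x := by
  have hlt : ∀ y ∈ E, y < a := fun y hy => (hub y hy).lt_of_ne fun h => haE (h ▸ hy)
  refine hx.le_of_forall_lt fun y hy => ?_
  by_cases hq : q ∈ insert a E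
  · exact (ha.eq_of_mem hq) ▸ hlt y hy
  · rw [IsSurrounding, if_neg hq] at ha
    rcases ha.2 with ⟨haq, _⟩ | ⟨_, hy'⟩
    · exact (hlt y hy).trans haq
    · exact (hy' y (Finset.mem_insert_of_mem hy)).resolve_right (hlt y hy).not_ge

lemma ge_of_isSurrounding_insert_bot (ha : IsSurrounding (insert a E) q a) (haE : a ∉ E)
    (hlb : ∀ y ∈ E, a ≤ y) (hx : IsSurrounding E q x) : ∀ y ∈ E, x ≤ y := by
  have hlt : ∀ y ∈ E, a < y := fun y hy => (hlb y hy).lt_of_ne fun h => haE (h ▸ hy)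
  refine hx.ge_of_forall_gt fun y hy => ?_
  by_cases hq : q ∈ insert a E
  · exact (ha.eq_of_mem hq) ▸ hlt y hy
  · rw [IsSurrounding, if_neg hq] at ha
    rcases ha.2 with ⟨_, hy'⟩ | ⟨hqa, _⟩
    · exact (hy' y (Finset.mem_insert_of_mem hy)).resolve_left (hlt y hy).not_ge
    · exact hqa.trans (hlt y hy)

end IsSurrounding

namespace NoFreeBetween

variable {F : Finset ℝ} {s m y : ℝ}

lemma le_of_lt_of_lt (h : NoFreeBetween F s m) (hsm : s < m) (hy : y ∈ F) (hym : y < m) : y ≤ s :=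
  le_of_not_gt fun hsy => h y hy ⟨by rwa [min_eq_left hsm.le], by rwa [max_eq_right hsm.le]⟩

lemma le_of_lt_of_gt (h : NoFreeBetween F s m) (hms : m < s) (hy : y ∈ F) (hmy : m < y) : s ≤ y :=
  le_of_not_gt fun hys => h y hy ⟨by rwa [min_eq_right hms.le], by rwa [max_eq_left hms.le]⟩

end NoFreeBetween

lemma exists_eq_insert_of_sdiff_eq_singleton {α : Type*} [DecidableEq α] {A B : Finset α}
    {a h : α} (hAB : A \ B = {a}) (hBA : B \ A = {h}) :
    ∃ G, A = insert a G ∧ B = insert h G ∧ a ∉ G ∧ h ∉ G ∧ a ∉ B := by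
  have ha := Finset.mem_sdiff.mp (hAB ▸ Finset.mem_singleton_self a)
  have hh := Finset.mem_sdiff.mp (hBA ▸ Finset.mem_singleton_self h)
  refine ⟨A ∩ B, ?_, ?_, fun h' => ha.2 (Finset.mem_inter.mp h').2,
    fun h' => hh.2 (Finset.mem_inter.mp h').1, ha.2⟩
  · rw [Finset.insert_eq, ← hAB, Finset.sdiff_union_inter]
  · rw [Finset.insert_eq, ← hBA, Finset.inter_comm, Finset.sdiff_union_inter]

/-- Coupled runs of an algorithm with free servers `insert a G` and of a hybrid with free servers
`insert h G`, both serving the same requests with the choice function `f`, until their free sets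
coincide; `hfin` is the server only the hybrid had free just before that (`h_{t*}`). -/
inductive Merges (f : ℝ → Finset ℝ → ℝ) : Finset ℝ → ℝ → ℝ → ℝ → Prop
  | merge {G : Finset ℝ} {a h q : ℝ} (hu : f q (insert a G) = a) (hv : f q (insert h G) = h) :
      Merges f G a h h
  | same {G : Finset ℝ} {a h hfin q : ℝ} (huv : f q (insert a G) = f q (insert h G))
      (hu : f q (insert a G) ∈ G) (hnext : Merges f (G.erase (f q (insert a G))) a h hfin) :
      Merges f G a h hfin
  | takeA {G : Finset ℝ} {a h hfin q : ℝ} (hu : f q (insert a G) = a)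
      (hv : f q (insert h G) ∈ G)
      (hnext : Merges f (G.erase (f q (insert h G))) (f q (insert h G)) h hfin) :
      Merges f G a h hfin
  | takeH {G : Finset ℝ} {a h hfin q : ℝ} (hv : f q (insert h G) = h)
      (hu : f q (insert a G) ∈ G)
      (hnext : Merges f (G.erase (f q (insert a G))) a (f q (insert a G)) hfin) :
      Merges f G a h hfin

namespace Merges

variable {f : ℝ → Finset ℝ → ℝ} {G A B : Finset ℝ} {q a h a' h' hfin : ℝ}

lemma final_mem (hm : Merges f G a h hfin) : hfin ∈ insert h G := by
  induction hm with
  | merge => exact Finset.mem_insert_self _ _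
  | same _ _ _ ih | takeA _ _ _ ih =>
    exact Finset.insert_subset_insert _ (Finset.erase_subset _ _) ih
  | takeH _ hu _ ih =>
    exact Finset.subset_insert _ _ (Finset.insert_subset hu (Finset.erase_subset _ _) ih)

lemma of_sdiff_of_erase_eq (hAB : A \ B = {a}) (hBA : B \ A = {h})
    (heq : A.erase (f q A) = B.erase (f q B)) : Merges f (A.erase a) a h h := by
  obtain ⟨G, rfl, rfl, haG, hhG, haB⟩ := exists_eq_insert_of_sdiff_eq_singleton hAB hBA
  rw [Finset.erase_insert haG]
  refine .merge (q := q) (by_contra fun hu => haB ?_) (by_contra fun hv => ?_)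
  · exact Finset.mem_of_mem_erase
      (heq ▸ Finset.mem_erase.mpr ⟨Ne.symm hu, Finset.mem_insert_self _ _⟩)
  · have := heq ▸ Finset.mem_erase.mpr ⟨Ne.symm hv, Finset.mem_insert_self h G⟩
    rcases Finset.mem_insert.mp (Finset.mem_of_mem_erase this) with rfl | hG
    exacts [haB (Finset.mem_insert_self _ _), hhG hG]

lemma of_sdiff_step (huA : f q A ∈ A) (hvB : f q B ∈ B) (hAB : A \ B = {a}) (hBA : B \ A = {h})
    (hAB' : A.erase (f q A) \ B.erase (f q B) = {a'})
    (hBA' : B.erase (f q B) \ A.erase (f q A) = {h'})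
    (hrec : Merges f ((A.erase (f q A)).erase a') a' h' hfin) :
    Merges f (A.erase a) a h hfin := by
  obtain ⟨G, rfl, rfl, haG, hhG, haB⟩ := exists_eq_insert_of_sdiff_eq_singleton hAB hBA
  rw [Finset.erase_insert haG]
  have ha' : ∀ x ∈ (insert a G).erase (f q (insert a G)),
      x ∉ (insert h G).erase (f q (insert h G)) → x = a' := fun x hx hx' =>
    Finset.mem_singleton.mp (hAB' ▸ Finset.mem_sdiff.mpr ⟨hx, hx'⟩)
  have hh' : ∀ x ∈ (insert h G).erase (f q (insert h G)),
      x ∉ (insert a G).erase (f q (insert a G)) → x = h' := fun x hx hx' =>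
    Finset.mem_singleton.mp (hBA' ▸ Finset.mem_sdiff.mpr ⟨hx, hx'⟩)
  have hah : a ≠ h := fun hah => haB (hah ▸ Finset.mem_insert_self a G)
  by_cases hu : f q (insert a G) = a <;> by_cases hv : f q (insert h G) = h
  · rw [hu, hv, Finset.erase_insert haG, Finset.erase_insert hhG, Finset.sdiff_self] at hAB'
    exact absurd hAB'.symm (Finset.singleton_ne_empty _)
  · have hvG := (Finset.mem_insert.mp hvB).resolve_left hv
    rw [hu, Finset.erase_insert haG] at ha' hh' hrec
    obtain rfl := ha' _ hvG (Finset.notMem_erase _ _)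
    obtain rfl := hh' h (Finset.mem_erase.mpr ⟨Ne.symm hv, Finset.mem_insert_self _ _⟩) hhG
    exact .takeA hu hvG hrec
  · have huG := (Finset.mem_insert.mp huA).resolve_left hu
    rw [hv, Finset.erase_insert hhG] at ha' hh'
    obtain rfl := ha' a (Finset.mem_erase.mpr ⟨Ne.symm hu, Finset.mem_insert_self _ _⟩) haG
    obtain rfl := hh' _ huG (Finset.notMem_erase _ _)
    rw [Finset.erase_insert_of_ne (Ne.symm hu), Finset.erase_insert
      fun h' => haG (Finset.mem_of_mem_erase h')] at hrec
    exact .takeH hv huG hrec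
  · have huG := (Finset.mem_insert.mp huA).resolve_left hu
    have hvG := (Finset.mem_insert.mp hvB).resolve_left hv
    have ha'a := ha' a (Finset.mem_erase.mpr ⟨Ne.symm hu, Finset.mem_insert_self _ _⟩)
      fun h' => haB (Finset.mem_of_mem_erase h')
    have huv : f q (insert a G) = f q (insert h G) := by_contra fun huv => haG <|
      (ha' _ (Finset.mem_erase.mpr ⟨Ne.symm huv, Finset.mem_insert_of_mem hvG⟩)
        (Finset.notMem_erase _ _)).trans ha'a.symm ▸ hvG
    obtain rfl := ha'a
    obtain rfl := hh' h (Finset.mem_erase.mpr ⟨Ne.symm hv, Finset.mem_insert_self _ _⟩)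
      fun h' => hah (Finset.mem_insert.mp (Finset.mem_of_mem_erase h') |>.resolve_right hhG).symm
    rw [Finset.erase_insert_of_ne (Ne.symm hu), Finset.erase_insert
      fun h' => haG (Finset.mem_of_mem_erase h')] at hrec
    exact .same huv huG hrec

end Merges

def SurroundingChoice (T : Finset ℝ) (g : ℝ → Finset ℝ → ℝ) : Prop :=
  ∀ r E, E ⊆ T → E.Nonempty → IsSurrounding E r (g r E)

/-- The branch condition of `IsPTCP.split`: `r` is served by a free server `≤ sa`. -/
def GoesLeft (S : Finset ℝ) (sa sb r : ℝ) (F : Finset ℝ) : Prop :=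
  ¬(F.filter (sb ≤ ·)).Nonempty ∨ (r ≤ sa + ptcpX S sa sb ∧ (F.filter (· ≤ sa)).Nonempty)

lemma right_nonempty_of_not_goesLeft {S F : Finset ℝ} {sa sb r : ℝ}
    (h : ¬GoesLeft S sa sb r F) :
    (F.filter (sb ≤ ·)).Nonempty :=
  not_not.mp fun h' => h (Or.inl h')

lemma add_ptcpX_lt_of_not_goesLeft {S F : Finset ℝ} {sa sb r : ℝ} (h : ¬GoesLeft S sa sb r F)
    (hne : (F.filter (· ≤ sa)).Nonempty) : sa + ptcpX S sa sb < r :=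
  not_le.mp fun hr => h (Or.inr ⟨hr, hne⟩)

/-- The non-recursive data of the constructor `IsPTCP.split`. -/
structure IsPTCPSplit (S : Finset ℝ) (f f₁ f₂ : ℝ → Finset ℝ → ℝ) (sa sb : ℝ) : Prop where
  two_le_card : 2 ≤ S.card
  left_mem : sa ∈ S
  right_mem : sb ∈ S
  lt : sa < sb
  gap : ∀ x ∈ S, x ≤ sa ∨ sb ≤ x
  gap_eq_maxGap : sb - sa = maxGap S
  apply_eq : ∀ r F, F ⊆ S → F.Nonempty →
    f r F = if ¬(F.filter (sb ≤ ·)).Nonempty ∨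
        (r ≤ sa + ptcpX S sa sb ∧ (F.filter (· ≤ sa)).Nonempty)
      then f₁ r (F.filter (· ≤ sa)) else f₂ r (F.filter (sb ≤ ·))

namespace IsPTCPSplit

variable {S F G : Finset ℝ} {f f₁ f₂ : ℝ → Finset ℝ → ℝ} {sa sb r q a : ℝ}
  (d : IsPTCPSplit S f f₁ f₂ sa sb)
include d

lemma sInf_le_left : sInf (S : Set ℝ) ≤ sa := csInf_le S.finite_toSet.bddBelow d.left_mem

lemma right_le_sSup : sb ≤ sSup (S : Set ℝ) := le_csSup S.finite_toSet.bddAbove d.right_mem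

lemma ptcpX_pos : 0 < ptcpX S sa sb := by
  have := d.sInf_le_left; have := d.right_le_sSup; have := d.lt
  unfold ptcpX
  apply div_pos <;> nlinarith

lemma ptcpX_lt : ptcpX S sa sb < sb - sa := by
  have := d.sInf_le_left; have := d.right_le_sSup; have := d.lt
  unfold ptcpX
  rw [div_lt_iff₀ (by linarith)]
  nlinarith

lemma apply_of_goesLeft (hF : F ⊆ S) (hne : F.Nonempty) (h : GoesLeft S sa sb r F) :
    f r F = f₁ r (F.filter (· ≤ sa)) :=
  (d.apply_eq r F hF hne).trans (if_pos h)

lemma apply_of_not_goesLeft (hF : F ⊆ S) (hne : F.Nonempty) (h : ¬GoesLeft S sa sb r F) :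
    f r F = f₂ r (F.filter (sb ≤ ·)) :=
  (d.apply_eq r F hF hne).trans (if_neg h)

lemma left_nonempty_of_goesLeft (hF : F ⊆ S) (hne : F.Nonempty) (h : GoesLeft S sa sb r F) :
    (F.filter (· ≤ sa)).Nonempty := by
  rcases h with h | h
  · obtain ⟨y, hy⟩ := hne
    refine ⟨y, Finset.mem_filter.mpr ⟨hy, (d.gap y (hF hy)).resolve_right fun hy' => ?_⟩⟩
    exact h ⟨y, Finset.mem_filter.mpr ⟨hy, hy'⟩⟩
  · exact h.2

lemma lt_of_goesLeft (h : GoesLeft S sa sb r F) {y : ℝ} (hy : y ∈ F) (hyb : sb ≤ y) : r < y := by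
  rcases h with h | h
  · exact absurd ⟨y, Finset.mem_filter.mpr ⟨hy, hyb⟩⟩ h
  · linarith [d.ptcpX_lt]

lemma lt_of_not_goesLeft (h : ¬GoesLeft S sa sb r F) {y : ℝ} (hy : y ∈ F) (hya : y ≤ sa) :
    y < r := by
  linarith [d.ptcpX_pos, add_ptcpX_lt_of_not_goesLeft h ⟨y, Finset.mem_filter.mpr ⟨hy, hya⟩⟩]

lemma goesLeft_insert_of_le (ha : a ≤ sa) :
    GoesLeft S sa sb q (insert a G) ↔
      ¬(G.filter (sb ≤ ·)).Nonempty ∨ q ≤ sa + ptcpX S sa sb := by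
  rw [GoesLeft, Finset.filter_insert, Finset.filter_insert, if_pos ha,
    if_neg (not_le.mpr (ha.trans_lt d.lt))]
  simp only [Finset.insert_nonempty, and_true]

lemma goesLeft_insert_of_ge (ha : sb ≤ a) :
    GoesLeft S sa sb q (insert a G) ↔
      q ≤ sa + ptcpX S sa sb ∧ (G.filter (· ≤ sa)).Nonempty := by
  rw [GoesLeft, Finset.filter_insert, Finset.filter_insert, if_pos ha,
    if_neg (not_le.mpr (d.lt.trans_le ha))]
  simp only [Finset.insert_nonempty, not_true_eq_false, false_or]

end IsPTCPSplit

namespace IsPTCPSplit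

variable {S G E : Finset ℝ} {f f₁ f₂ : ℝ → Finset ℝ → ℝ} {sa sb r q a b h hfin : ℝ}
  (d : IsPTCPSplit S f f₁ f₂ sa sb) (h₁ : SurroundingChoice (S.filter (· ≤ sa)) f₁)
  (h₂ : SurroundingChoice (S.filter (sb ≤ ·)) f₂)
include d h₁ h₂

lemma apply_le_iff (hE : E ⊆ S) (hne : E.Nonempty) : f q E ≤ sa ↔ GoesLeft S sa sb q E := by
  by_cases hl : GoesLeft S sa sb q E
  · rw [d.apply_of_goesLeft hE hne hl]
    have := h₁ q _ (Finset.filter_subset_filter _ hE) (d.left_nonempty_of_goesLeft hE hne hl)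
    simpa [hl] using (Finset.mem_filter.mp this.1).2
  · rw [d.apply_of_not_goesLeft hE hne hl]
    have := h₂ q _ (Finset.filter_subset_filter _ hE) (right_nonempty_of_not_goesLeft hl)
    simpa [hl] using d.lt.trans_le (Finset.mem_filter.mp this.1).2

lemma apply_of_le (hE : E ⊆ S) (hne : E.Nonempty) (h : f q E ≤ sa) :
    f q E = f₁ q (E.filter (· ≤ sa)) :=
  d.apply_of_goesLeft hE hne ((d.apply_le_iff h₁ h₂ hE hne).mp h)

lemma apply_of_ge (hE : E ⊆ S) (hne : E.Nonempty) (h : sb ≤ f q E) :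
    f q E = f₂ q (E.filter (sb ≤ ·)) :=
  d.apply_of_not_goesLeft hE hne fun hl =>
    (d.lt.trans_le h).not_ge ((d.apply_le_iff h₁ h₂ hE hne).mpr hl)

lemma le_or_ge_apply (hE : E ⊆ S) (hne : E.Nonempty) : f q E ≤ sa ∨ sb ≤ f q E := by
  by_cases hl : GoesLeft S sa sb q E
  · exact Or.inl ((d.apply_le_iff h₁ h₂ hE hne).mpr hl)
  · rw [d.apply_of_not_goesLeft hE hne hl]
    exact Or.inr (Finset.mem_filter.mp
      (h₂ q _ (Finset.filter_subset_filter _ hE) (right_nonempty_of_not_goesLeft hl)).1).2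

lemma isSurrounding_filter_left (hE : E ⊆ S) (hne : E.Nonempty) (h : f q E ≤ sa) :
    IsSurrounding (E.filter (· ≤ sa)) q (f q E) := by
  have hl := (d.apply_le_iff h₁ h₂ hE hne).mp h
  rw [d.apply_of_goesLeft hE hne hl]
  exact h₁ q _ (Finset.filter_subset_filter _ hE) (d.left_nonempty_of_goesLeft hE hne hl)

lemma right_le_apply_iff (hE : E ⊆ S) (hne : E.Nonempty) : sb ≤ f q E ↔ ¬f q E ≤ sa :=
  ⟨fun h h' => (d.lt.trans_le h).not_ge h', (d.le_or_ge_apply h₁ h₂ hE hne).resolve_left⟩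

lemma isSurrounding_filter_right (hE : E ⊆ S) (hne : E.Nonempty) (h : sb ≤ f q E) :
    IsSurrounding (E.filter (sb ≤ ·)) q (f q E) := by
  have hl : ¬GoesLeft S sa sb q E := by
    rw [← d.apply_le_iff h₁ h₂ hE hne, ← d.right_le_apply_iff h₁ h₂ hE hne]
    exact h
  rw [d.apply_of_not_goesLeft hE hne hl]
  exact h₂ q _ (Finset.filter_subset_filter _ hE) (right_nonempty_of_not_goesLeft hl)

lemma apply_mem (hE : E ⊆ S) (hne : E.Nonempty) : f q E ∈ E := by
  rcases d.le_or_ge_apply h₁ h₂ hE hne (q := q) with h | h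
  · exact Finset.filter_subset _ _ (d.isSurrounding_filter_left h₁ h₂ hE hne h).1
  · exact Finset.filter_subset _ _ (d.isSurrounding_filter_right h₁ h₂ hE hne h).1

lemma apply_insert_le_iff_of_le (hG : G ⊆ S) (haS : a ∈ S) (hbS : b ∈ S) (ha : a ≤ sa)
    (hb : b ≤ sa) : f q (insert a G) ≤ sa ↔ f q (insert b G) ≤ sa := by
  rw [d.apply_le_iff h₁ h₂ (Finset.insert_subset haS hG) (Finset.insert_nonempty _ _),
    d.apply_le_iff h₁ h₂ (Finset.insert_subset hbS hG) (Finset.insert_nonempty _ _),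
    d.goesLeft_insert_of_le ha, d.goesLeft_insert_of_le hb]

lemma apply_insert_le_iff_of_ge (hG : G ⊆ S) (haS : a ∈ S) (hbS : b ∈ S) (ha : sb ≤ a)
    (hb : sb ≤ b) : f q (insert a G) ≤ sa ↔ f q (insert b G) ≤ sa := by
  rw [d.apply_le_iff h₁ h₂ (Finset.insert_subset haS hG) (Finset.insert_nonempty _ _),
    d.apply_le_iff h₁ h₂ (Finset.insert_subset hbS hG) (Finset.insert_nonempty _ _),
    d.goesLeft_insert_of_ge ha, d.goesLeft_insert_of_ge hb]

lemma right_le_apply_insert_iff_of_ge (hG : G ⊆ S) (haS : a ∈ S) (hbS : b ∈ S) (ha : sb ≤ a)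
    (hb : sb ≤ b) : sb ≤ f q (insert a G) ↔ sb ≤ f q (insert b G) := by
  rw [d.right_le_apply_iff h₁ h₂ (Finset.insert_subset haS hG) (Finset.insert_nonempty _ _),
    d.right_le_apply_iff h₁ h₂ (Finset.insert_subset hbS hG) (Finset.insert_nonempty _ _),
    d.apply_insert_le_iff_of_ge h₁ h₂ hG haS hbS ha hb]

lemma goesLeft_iff_of_mem_uIcc (hE : E ⊆ S) (hne : E.Nonempty) (hq : q ∈ Set.uIcc r (f r E)) :
    GoesLeft S sa sb q E ↔ GoesLeft S sa sb r E := by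
  have hq' := Set.mem_uIcc.mp hq
  by_cases hl : GoesLeft S sa sb r E
  · have hm := (d.apply_le_iff h₁ h₂ hE hne).mpr hl
    refine iff_of_true (hl.imp id fun hr => ⟨?_, hr.2⟩) hl
    rcases hq' with ⟨-, h⟩ | ⟨-, h⟩ <;> linarith [hr.1, d.ptcpX_pos]
  · have hm := (d.right_le_apply_iff h₁ h₂ hE hne).mpr ((d.apply_le_iff h₁ h₂ hE hne).not.mpr hl)
    refine iff_of_false ?_ hl
    rintro (h | ⟨hqx, hne₁⟩)
    · exact h (right_nonempty_of_not_goesLeft hl)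
    · have := add_ptcpX_lt_of_not_goesLeft hl hne₁
      rcases hq' with ⟨h, -⟩ | ⟨h, -⟩ <;> linarith [d.ptcpX_lt]

lemma apply_insert_of_le (hG : G ⊆ S) (haS : a ∈ S) (ha : a ≤ sa)
    (hu : f q (insert a G) ≤ sa) : f q (insert a G) = f₁ q (insert a (G.filter (· ≤ sa))) := by
  rw [d.apply_of_le h₁ h₂ (Finset.insert_subset haS hG) (Finset.insert_nonempty _ _) hu,
    Finset.filter_insert, if_pos ha]

lemma apply_insert_of_ge (hG : G ⊆ S) (haS : a ∈ S) (ha : sb ≤ a)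
    (hu : sb ≤ f q (insert a G)) : f q (insert a G) = f₂ q (insert a (G.filter (sb ≤ ·))) := by
  rw [d.apply_of_ge h₁ h₂ (Finset.insert_subset haS hG) (Finset.insert_nonempty _ _) hu,
    Finset.filter_insert, if_pos ha]

lemma merges_filter_left (hm : Merges f G a h hfin) (hG : G ⊆ S) (haS : a ∈ S) (hhS : h ∈ S)
    (ha : a ≤ sa) (hh : h ≤ sa) : Merges f₁ (G.filter (· ≤ sa)) a h hfin := by
  induction hm with
  | @merge G a h q hu hv =>
    refine .merge (q := q) ?_ ?_
    · rw [← d.apply_insert_of_le h₁ h₂ hG haS ha (hu.le.trans ha), hu]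
    · rw [← d.apply_insert_of_le h₁ h₂ hG hhS hh (hv.le.trans hh), hv]
  | @same G a h hfin q huv hu _ ih =>
    have hrec := ih ((Finset.erase_subset _ _).trans hG) haS hhS ha hh
    rw [Finset.filter_erase] at hrec
    by_cases hul : f q (insert a G) ≤ sa
    · have hmem : f q (insert a G) ∈ G.filter (· ≤ sa) := Finset.mem_filter.mpr ⟨hu, hul⟩
      have hvl : f q (insert h G) ≤ sa := huv ▸ hul
      rw [d.apply_insert_of_le h₁ h₂ hG haS ha hul] at hmem hrec huv
      rw [d.apply_insert_of_le h₁ h₂ hG hhS hh hvl] at huv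
      exact .same huv hmem hrec
    · rwa [Finset.erase_eq_of_notMem (s := G.filter (· ≤ sa))
        fun hmem => hul (Finset.mem_filter.mp hmem).2] at hrec
  | @takeA G a h hfin q hu hv _ ih =>
    have hvl : f q (insert h G) ≤ sa :=
      (d.apply_insert_le_iff_of_le h₁ h₂ hG haS hhS ha hh).mp (hu.le.trans ha)
    have hmem : f q (insert h G) ∈ G.filter (· ≤ sa) := Finset.mem_filter.mpr ⟨hv, hvl⟩
    have hrec := ih ((Finset.erase_subset _ _).trans hG) (hG hv) hhS hvl hh
    rw [Finset.filter_erase, d.apply_insert_of_le h₁ h₂ hG hhS hh hvl] at hrec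
    rw [d.apply_insert_of_le h₁ h₂ hG hhS hh hvl] at hmem
    exact .takeA (by rw [← d.apply_insert_of_le h₁ h₂ hG haS ha (hu.le.trans ha), hu]) hmem hrec
  | @takeH G a h hfin q hv hu _ ih =>
    have hul : f q (insert a G) ≤ sa :=
      (d.apply_insert_le_iff_of_le h₁ h₂ hG haS hhS ha hh).mpr (hv.le.trans hh)
    have hmem : f q (insert a G) ∈ G.filter (· ≤ sa) := Finset.mem_filter.mpr ⟨hu, hul⟩
    have hrec := ih ((Finset.erase_subset _ _).trans hG) haS (hG hu) ha hul
    rw [Finset.filter_erase, d.apply_insert_of_le h₁ h₂ hG haS ha hul] at hrec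
    rw [d.apply_insert_of_le h₁ h₂ hG haS ha hul] at hmem
    exact .takeH (by rw [← d.apply_insert_of_le h₁ h₂ hG hhS hh (hv.le.trans hh), hv]) hmem hrec

lemma merges_filter_right (hm : Merges f G a h hfin) (hG : G ⊆ S) (haS : a ∈ S) (hhS : h ∈ S)
    (ha : sb ≤ a) (hh : sb ≤ h) : Merges f₂ (G.filter (sb ≤ ·)) a h hfin := by
  induction hm with
  | @merge G a h q hu hv =>
    refine .merge (q := q) ?_ ?_
    · rw [← d.apply_insert_of_ge h₁ h₂ hG haS ha (ha.trans hu.ge), hu]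
    · rw [← d.apply_insert_of_ge h₁ h₂ hG hhS hh (hh.trans hv.ge), hv]
  | @same G a h hfin q huv hu _ ih =>
    have hrec := ih ((Finset.erase_subset _ _).trans hG) haS hhS ha hh
    rw [Finset.filter_erase] at hrec
    by_cases hur : sb ≤ f q (insert a G)
    · have hmem : f q (insert a G) ∈ G.filter (sb ≤ ·) := Finset.mem_filter.mpr ⟨hu, hur⟩
      have hvr : sb ≤ f q (insert h G) := huv ▸ hur
      rw [d.apply_insert_of_ge h₁ h₂ hG haS ha hur] at hmem hrec huv
      rw [d.apply_insert_of_ge h₁ h₂ hG hhS hh hvr] at huv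
      exact .same huv hmem hrec
    · rwa [Finset.erase_eq_of_notMem (s := G.filter (sb ≤ ·))
        fun hmem => hur (Finset.mem_filter.mp hmem).2] at hrec
  | @takeA G a h hfin q hu hv _ ih =>
    have hvr : sb ≤ f q (insert h G) :=
      (d.right_le_apply_insert_iff_of_ge h₁ h₂ hG haS hhS ha hh).mp (ha.trans hu.ge)
    have hmem : f q (insert h G) ∈ G.filter (sb ≤ ·) := Finset.mem_filter.mpr ⟨hv, hvr⟩
    have hrec := ih ((Finset.erase_subset _ _).trans hG) (hG hv) hhS hvr hh
    rw [Finset.filter_erase, d.apply_insert_of_ge h₁ h₂ hG hhS hh hvr] at hrec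
    rw [d.apply_insert_of_ge h₁ h₂ hG hhS hh hvr] at hmem
    exact .takeA (by rw [← d.apply_insert_of_ge h₁ h₂ hG haS ha (ha.trans hu.ge), hu]) hmem hrec
  | @takeH G a h hfin q hv hu _ ih =>
    have hur : sb ≤ f q (insert a G) :=
      (d.right_le_apply_insert_iff_of_ge h₁ h₂ hG haS hhS ha hh).mpr (hh.trans hv.ge)
    have hmem : f q (insert a G) ∈ G.filter (sb ≤ ·) := Finset.mem_filter.mpr ⟨hu, hur⟩
    have hrec := ih ((Finset.erase_subset _ _).trans hG) haS (hG hu) ha hur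
    rw [Finset.filter_erase, d.apply_insert_of_ge h₁ h₂ hG haS ha hur] at hrec
    rw [d.apply_insert_of_ge h₁ h₂ hG haS ha hur] at hmem
    exact .takeH (by rw [← d.apply_insert_of_ge h₁ h₂ hG hhS hh (hh.trans hv.ge), hv]) hmem hrec

lemma le_apply_insert_of_apply_insert_eq (hG : G ⊆ S) (haS : a ∈ S) (hhS : h ∈ S) (haG : a ∉ G)
    (hh : sb ≤ h) (hub : ∀ y ∈ G, y ≤ sa → y ≤ a) (hu : f q (insert a G) = a)
    (hv : f q (insert h G) ≤ sa) : ∀ y ∈ G, y ≤ sa → y ≤ f q (insert h G) := by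
  have ha : a ≤ sa := (d.gap a haS).resolve_right fun ha => hv.not_gt
    (d.lt.trans_le ((d.right_le_apply_insert_iff_of_ge h₁ h₂ hG haS hhS ha hh).mp (ha.trans hu.ge)))
  have hsurr_a := d.isSurrounding_filter_left h₁ h₂ (Finset.insert_subset haS hG)
    (Finset.insert_nonempty _ _) (hu.le.trans ha)
  have hsurr_v := d.isSurrounding_filter_left h₁ h₂ (Finset.insert_subset hhS hG)
    (Finset.insert_nonempty _ _) hv
  rw [hu, Finset.filter_insert, if_pos ha] at hsurr_a
  rw [Finset.filter_insert, if_neg (d.lt.trans_le hh).not_ge] at hsurr_v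
  intro y hy hya
  exact hsurr_a.le_of_isSurrounding_insert_top (fun h' => haG (Finset.filter_subset _ _ h'))
    (fun y hy => hub y (Finset.mem_filter.mp hy).1 (Finset.mem_filter.mp hy).2) hsurr_v y
    (Finset.mem_filter.mpr ⟨hy, hya⟩)

lemma apply_insert_le_of_apply_insert_eq (hG : G ⊆ S) (haS : a ∈ S) (hhS : h ∈ S) (haG : a ∉ G)
    (hh : h ≤ sa) (hlb : ∀ y ∈ G, sb ≤ y → a ≤ y) (hu : f q (insert a G) = a)
    (hv : sb ≤ f q (insert h G)) : ∀ y ∈ G, sb ≤ y → f q (insert h G) ≤ y := by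
  have ha : sb ≤ a := (d.gap a haS).resolve_left fun ha => (d.lt.trans_le hv).not_ge
    ((d.apply_insert_le_iff_of_le h₁ h₂ hG haS hhS ha hh).mp (hu.le.trans ha))
  have hsurr_a := d.isSurrounding_filter_right h₁ h₂ (Finset.insert_subset haS hG)
    (Finset.insert_nonempty _ _) (ha.trans hu.ge)
  have hsurr_v := d.isSurrounding_filter_right h₁ h₂ (Finset.insert_subset hhS hG)
    (Finset.insert_nonempty _ _) hv
  rw [hu, Finset.filter_insert, if_pos ha] at hsurr_a
  rw [Finset.filter_insert, if_neg (hh.trans_lt d.lt).not_ge] at hsurr_v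
  intro y hy hyb
  exact hsurr_a.ge_of_isSurrounding_insert_bot (fun h' => haG (Finset.filter_subset _ _ h'))
    (fun y hy => hlb y (Finset.mem_filter.mp hy).1 (Finset.mem_filter.mp hy).2) hsurr_v y
    (Finset.mem_filter.mpr ⟨hy, hyb⟩)

lemma right_le_apply_insert_of_apply_insert_eq (hG : G ⊆ S) (haS : a ∈ S) (hhS : h ∈ S)
    (haG : a ∉ G) (hh : sb ≤ h) (hub : ∀ y ∈ G, y ≤ sa → y ≤ a) (hv : f q (insert h G) = h)
    (hu : f q (insert a G) ∈ G) : sb ≤ f q (insert a G) := by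
  by_contra hur
  have hul : f q (insert a G) ≤ sa := (d.gap _ (hG hu)).resolve_right hur
  have ha : a ≤ sa := (d.gap a haS).resolve_right fun ha => hur
    ((d.right_le_apply_insert_iff_of_ge h₁ h₂ hG haS hhS ha hh).mpr (hh.trans hv.ge))
  have hq : sa + ptcpX S sa sb < q := by
    refine add_ptcpX_lt_of_not_goesLeft (F := insert h G) ?_
      ⟨_, Finset.mem_filter.mpr ⟨Finset.mem_insert_of_mem hu, hul⟩⟩
    rw [← d.apply_le_iff h₁ h₂ (Finset.insert_subset hhS hG) (Finset.insert_nonempty _ _), hv]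
    exact (d.lt.trans_le hh).not_ge
  have hsurr := d.isSurrounding_filter_left h₁ h₂ (Finset.insert_subset haS hG)
    (Finset.insert_nonempty _ _) hul
  rw [Finset.filter_insert, if_pos ha] at hsurr
  have hua := hsurr.eq_of_isGreatest ⟨Finset.mem_insert_self _ _, fun y hy => ?_⟩
    (by linarith [d.ptcpX_pos])
  · exact haG (hua ▸ hu)
  · rcases Finset.mem_insert.mp hy with rfl | hy
    exacts [le_rfl, hub y (Finset.mem_filter.mp hy).1 (Finset.mem_filter.mp hy).2]

lemma apply_insert_le_left_of_apply_insert_eq (hG : G ⊆ S) (haS : a ∈ S) (hhS : h ∈ S)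
    (haG : a ∉ G) (hh : h ≤ sa) (hlb : ∀ y ∈ G, sb ≤ y → a ≤ y) (hv : f q (insert h G) = h)
    (hu : f q (insert a G) ∈ G) : f q (insert a G) ≤ sa := by
  by_contra hul
  have hur : sb ≤ f q (insert a G) := (d.gap _ (hG hu)).resolve_left hul
  have ha : sb ≤ a := (d.gap a haS).resolve_left fun ha => hul
    ((d.apply_insert_le_iff_of_le h₁ h₂ hG haS hhS ha hh).mpr (hv.le.trans hh))
  have hq : q ≤ sa + ptcpX S sa sb := by
    have hl := (d.apply_le_iff h₁ h₂ (Finset.insert_subset hhS hG) (Finset.insert_nonempty _ _)).mp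
      (hv.le.trans hh)
    exact ((d.goesLeft_insert_of_le hh).mp hl).resolve_left
      (not_not.mpr ⟨_, Finset.mem_filter.mpr ⟨hu, hur⟩⟩)
  have hsurr := d.isSurrounding_filter_right h₁ h₂ (Finset.insert_subset haS hG)
    (Finset.insert_nonempty _ _) hur
  rw [Finset.filter_insert, if_pos ha] at hsurr
  have hua := hsurr.eq_of_isLeast ⟨Finset.mem_insert_self _ _, fun y hy => ?_⟩
    (by linarith [d.ptcpX_lt])
  · exact haG (hua ▸ hu)
  · rcases Finset.mem_insert.mp hy with rfl | hy
    exacts [le_rfl, hlb y (Finset.mem_filter.mp hy).1 (Finset.mem_filter.mp hy).2]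

lemma right_le_of_merges (hm : Merges f G a h hfin) (hG : G ⊆ S) (haS : a ∈ S) (hhS : h ∈ S)
    (haG : a ∉ G) (hh : sb ≤ h) (hub : ∀ y ∈ G, y ≤ sa → y ≤ a) : sb ≤ hfin := by
  induction hm with
  | merge => exact hh
  | same _ _ _ ih =>
    exact ih ((Finset.erase_subset _ _).trans hG) haS hhS
      (fun h' => haG (Finset.mem_of_mem_erase h'))
      hh fun y hy => hub y (Finset.mem_of_mem_erase hy)
  | @takeA G a h hfin q hu hv _ ih =>
    refine ih ((Finset.erase_subset _ _).trans hG) (hG hv) hhS (Finset.notMem_erase _ _) hh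
      fun y hy hya => ?_
    by_cases hvl : f q (insert h G) ≤ sa
    · exact d.le_apply_insert_of_apply_insert_eq h₁ h₂ hG haS hhS haG hh hub hu hvl y
        (Finset.mem_of_mem_erase hy) hya
    · linarith [(d.gap _ (hG hv)).resolve_left hvl, d.lt]
  | takeH hv hu _ ih =>
    exact ih ((Finset.erase_subset _ _).trans hG) haS (hG hu)
      (fun h' => haG (Finset.mem_of_mem_erase h'))
      (d.right_le_apply_insert_of_apply_insert_eq h₁ h₂ hG haS hhS haG hh hub hv hu)
      fun y hy => hub y (Finset.mem_of_mem_erase hy)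

lemma le_left_of_merges (hm : Merges f G a h hfin) (hG : G ⊆ S) (haS : a ∈ S) (hhS : h ∈ S)
    (haG : a ∉ G) (hh : h ≤ sa) (hlb : ∀ y ∈ G, sb ≤ y → a ≤ y) : hfin ≤ sa := by
  induction hm with
  | merge => exact hh
  | same _ _ _ ih =>
    exact ih ((Finset.erase_subset _ _).trans hG) haS hhS
      (fun h' => haG (Finset.mem_of_mem_erase h'))
      hh fun y hy => hlb y (Finset.mem_of_mem_erase hy)
  | @takeA G a h hfin q hu hv _ ih =>
    refine ih ((Finset.erase_subset _ _).trans hG) (hG hv) hhS (Finset.notMem_erase _ _) hh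
      fun y hy hyb => ?_
    by_cases hvr : sb ≤ f q (insert h G)
    · exact d.apply_insert_le_of_apply_insert_eq h₁ h₂ hG haS hhS haG hh hlb hu hvr y
        (Finset.mem_of_mem_erase hy) hyb
    · linarith [(d.gap _ (hG hv)).resolve_right hvr, d.lt]
  | takeH hv hu _ ih =>
    exact ih ((Finset.erase_subset _ _).trans hG) haS (hG hu)
      (fun h' => haG (Finset.mem_of_mem_erase h'))
      (d.apply_insert_le_left_of_apply_insert_eq h₁ h₂ hG haS hhS haG hh hlb hv hu)
      fun y hy => hlb y (Finset.mem_of_mem_erase hy)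

end IsPTCPSplit

lemma Lval_le_alpha {S T : Finset ℝ} (hT : T ⊆ S) : Lval T ≤ alpha S :=
  Finset.le_max' _ _ (Finset.mem_image_of_mem _ (Finset.mem_powerset.mpr hT))

lemma alpha_mono {S T : Finset ℝ} (h : T ⊆ S) : alpha T ≤ alpha S :=
  Finset.max'_le _ _ _ fun _ hy => by
    obtain ⟨U, hU, rfl⟩ := Finset.mem_image.mp hy
    exact Lval_le_alpha ((Finset.mem_powerset.mp hU).trans h)

namespace IsPTCPSplit

variable {S : Finset ℝ} {f f₁ f₂ : ℝ → Finset ℝ → ℝ} {sa sb r s h : ℝ}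
  (d : IsPTCPSplit S f f₁ f₂ sa sb)
include d

lemma diam_div_le_alpha : (sSup (S : Set ℝ) - sInf (S : Set ℝ)) / (sb - sa) ≤ alpha S := by
  have := Lval_le_alpha (Finset.Subset.refl S)
  rwa [Lval, if_pos d.two_le_card, ← d.gap_eq_maxGap] at this

lemma one_le_diam_div : 1 ≤ (sSup (S : Set ℝ) - sInf (S : Set ℝ)) / (sb - sa) := by
  rw [one_le_div (sub_pos.mpr d.lt)]
  linarith [d.sInf_le_left, d.right_le_sSup]

/- `ptcpX` is the break-even point: with `L = diam S / (sb - sa)`, a request `r` satisfies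
`sSup S - r ≤ L * (r - sa)` iff `sa + ptcpX ≤ r`, and `r - sInf S ≤ L * (sb - r)` iff
`r ≤ sa + ptcpX`. -/

lemma abs_sub_le_of_add_ptcpX_lt (hr : sa + ptcpX S sa sb < r) (hs : s ≤ sa) (hS : h ∈ S)
    (hh : sb ≤ h) : |h - r| ≤ alpha S * |r - s| := by
  set L := (sSup (S : Set ℝ) - sInf (S : Set ℝ)) / (sb - sa)
  have hlo := d.sInf_le_left
  have hhi := le_csSup S.finite_toSet.bddAbove hS
  have hD : 0 < sb - sa := sub_pos.mpr d.lt
  have hL : sSup (S : Set ℝ) - r ≤ L * (r - sa) := by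
    unfold ptcpX at hr
    rw [← lt_sub_iff_add_lt', div_lt_iff₀ (by linarith)] at hr
    rw [div_mul_eq_mul_div, le_div_iff₀ hD]
    linarith
  have hrs : 0 ≤ r - s := by linarith [d.ptcpX_pos]
  have h1 : r - s ≤ L * (r - s) := le_mul_of_one_le_left hrs d.one_le_diam_div
  have h2 : L * (r - sa) ≤ L * (r - s) :=
    mul_le_mul_of_nonneg_left (by linarith) (zero_le_one.trans d.one_le_diam_div)
  calc |h - r| ≤ L * (r - s) := abs_le.mpr ⟨by linarith, by linarith⟩
    _ ≤ alpha S * |r - s| := by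
      rw [abs_of_nonneg hrs]
      exact mul_le_mul_of_nonneg_right d.diam_div_le_alpha hrs

lemma abs_sub_le_of_le_add_ptcpX (hr : r ≤ sa + ptcpX S sa sb) (hs : sb ≤ s) (hS : h ∈ S)
    (hh : h ≤ sa) : |h - r| ≤ alpha S * |r - s| := by
  set L := (sSup (S : Set ℝ) - sInf (S : Set ℝ)) / (sb - sa)
  have hlo := csInf_le S.finite_toSet.bddBelow hS
  have hhi := d.right_le_sSup
  have hD : 0 < sb - sa := sub_pos.mpr d.lt
  have hx := d.ptcpX_lt
  have hL : r - sInf (S : Set ℝ) ≤ L * (sb - r) := by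
    unfold ptcpX at hr
    rw [← sub_le_iff_le_add', le_div_iff₀ (by linarith)] at hr
    rw [div_mul_eq_mul_div, le_div_iff₀ hD]
    linarith
  have hsr : 0 ≤ s - r := by linarith
  have h1 : s - r ≤ L * (s - r) := le_mul_of_one_le_left hsr d.one_le_diam_div
  have h2 : L * (sb - r) ≤ L * (s - r) :=
    mul_le_mul_of_nonneg_left (by linarith) (zero_le_one.trans d.one_le_diam_div)
  calc |h - r| ≤ L * (s - r) := abs_le.mpr ⟨by linarith, by linarith⟩
    _ ≤ alpha S * |r - s| := by
      rw [abs_sub_comm, abs_of_nonneg hsr]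
      exact mul_le_mul_of_nonneg_right d.diam_div_le_alpha hsr

end IsPTCPSplit

/-- Condition (C3) in terms of coupled runs: the algorithm serves `r` from the free set `F` with
`f r F`, the hybrid with a free server `s` next to it. -/
def HybridBound (S : Finset ℝ) (f : ℝ → Finset ℝ → ℝ) : Prop :=
  ∀ F r s hfin, F ⊆ S → s ∈ F → s ≠ f r F → NoFreeBetween F s (f r F) →
    Merges f ((F.erase (f r F)).erase s) s (f r F) hfin → |hfin - r| ≤ alpha S * |r - s|

namespace IsPTCPSplit

variable {S F : Finset ℝ} {f f₁ f₂ : ℝ → Finset ℝ → ℝ} {sa sb r s hfin : ℝ}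
  (d : IsPTCPSplit S f f₁ f₂ sa sb) (h₁ : SurroundingChoice (S.filter (· ≤ sa)) f₁)
  (h₂ : SurroundingChoice (S.filter (sb ≤ ·)) f₂)
include d h₁ h₂

lemma abs_sub_le_of_merges_of_le_of_ge (hF : F ⊆ S) (hs : s ∈ F) (hsl : s ≤ sa)
    (hmr : sb ≤ f r F) (hnfb : NoFreeBetween F s (f r F))
    (hm : Merges f ((F.erase (f r F)).erase s) s (f r F) hfin) :
    |hfin - r| ≤ alpha S * |r - s| := by
  have hne : F.Nonempty := ⟨s, hs⟩
  have hmF : f r F ∈ F := d.apply_mem h₁ h₂ hF hne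
  have hG : (F.erase (f r F)).erase s ⊆ S :=
    (Finset.erase_subset _ _).trans ((Finset.erase_subset _ _).trans hF)
  have hsm : s < f r F := hsl.trans_lt (d.lt.trans_le hmr)
  have hub : ∀ y ∈ (F.erase (f r F)).erase s, y ≤ sa → y ≤ s := fun y hy hya =>
    hnfb.le_of_lt_of_lt hsm (Finset.mem_of_mem_erase (Finset.mem_of_mem_erase hy))
      (by linarith [d.lt])
  have hr : sa + ptcpX S sa sb < r := add_ptcpX_lt_of_not_goesLeft
    (by rw [← d.apply_le_iff h₁ h₂ hF hne]; exact (d.lt.trans_le hmr).not_ge)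
    ⟨s, Finset.mem_filter.mpr ⟨hs, hsl⟩⟩
  exact d.abs_sub_le_of_add_ptcpX_lt hr hsl (Finset.insert_subset (hF hmF) hG hm.final_mem)
    (d.right_le_of_merges h₁ h₂ hm hG (hF hs) (hF hmF) (Finset.notMem_erase _ _) hmr hub)

lemma abs_sub_le_of_merges_of_ge_of_le (hF : F ⊆ S) (hs : s ∈ F) (hsr : sb ≤ s)
    (hml : f r F ≤ sa) (hnfb : NoFreeBetween F s (f r F))
    (hm : Merges f ((F.erase (f r F)).erase s) s (f r F) hfin) :
    |hfin - r| ≤ alpha S * |r - s| := by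
  have hne : F.Nonempty := ⟨s, hs⟩
  have hmF : f r F ∈ F := d.apply_mem h₁ h₂ hF hne
  have hG : (F.erase (f r F)).erase s ⊆ S :=
    (Finset.erase_subset _ _).trans ((Finset.erase_subset _ _).trans hF)
  have hms : f r F < s := hml.trans_lt (d.lt.trans_le hsr)
  have hlb : ∀ y ∈ (F.erase (f r F)).erase s, sb ≤ y → s ≤ y := fun y hy hyb =>
    hnfb.le_of_lt_of_gt hms (Finset.mem_of_mem_erase (Finset.mem_of_mem_erase hy))
      (by linarith [d.lt])
  have hr : r ≤ sa + ptcpX S sa sb :=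
    (((d.apply_le_iff h₁ h₂ hF hne).mp hml).resolve_left
      (not_not.mpr ⟨s, Finset.mem_filter.mpr ⟨hs, hsr⟩⟩)).1
  exact d.abs_sub_le_of_le_add_ptcpX hr hsr (Finset.insert_subset (hF hmF) hG hm.final_mem)
    (d.le_left_of_merges h₁ h₂ hm hG (hF hs) (hF hmF) (Finset.notMem_erase _ _) hml hlb)

lemma hybridBound (ih₁ : HybridBound (S.filter (· ≤ sa)) f₁)
    (ih₂ : HybridBound (S.filter (sb ≤ ·)) f₂) : HybridBound S f := by
  intro F r s hfin hF hs hsm hnfb hm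
  have hne : F.Nonempty := ⟨s, hs⟩
  have hmF : f r F ∈ F := d.apply_mem h₁ h₂ hF hne
  have hG : (F.erase (f r F)).erase s ⊆ S :=
    (Finset.erase_subset _ _).trans ((Finset.erase_subset _ _).trans hF)
  rcases d.gap s (hF hs) with hsl | hsr <;>
    rcases d.le_or_ge_apply h₁ h₂ hF hne (q := r) with hml | hmr
  · have hproj := d.merges_filter_left h₁ h₂ hm hG (hF hs) (hF hmF) hsl hml
    have happ := d.apply_of_le h₁ h₂ hF hne hml
    rw [Finset.filter_erase, Finset.filter_erase, happ] at hproj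
    rw [happ] at hsm hnfb
    calc |hfin - r| ≤ alpha (S.filter (· ≤ sa)) * |r - s| :=
          ih₁ _ r s hfin (Finset.filter_subset_filter _ hF) (Finset.mem_filter.mpr ⟨hs, hsl⟩) hsm
            (fun y hy => hnfb y (Finset.filter_subset _ _ hy)) hproj
      _ ≤ alpha S * |r - s| :=
          mul_le_mul_of_nonneg_right (alpha_mono (Finset.filter_subset _ _)) (abs_nonneg _)
  · exact d.abs_sub_le_of_merges_of_le_of_ge h₁ h₂ hF hs hsl hmr hnfb hm
  · exact d.abs_sub_le_of_merges_of_ge_of_le h₁ h₂ hF hs hsr hml hnfb hm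
  · have hproj := d.merges_filter_right h₁ h₂ hm hG (hF hs) (hF hmF) hsr hmr
    have happ := d.apply_of_ge h₁ h₂ hF hne hmr
    rw [Finset.filter_erase, Finset.filter_erase, happ] at hproj
    rw [happ] at hsm hnfb
    calc |hfin - r| ≤ alpha (S.filter (sb ≤ ·)) * |r - s| :=
          ih₂ _ r s hfin (Finset.filter_subset_filter _ hF) (Finset.mem_filter.mpr ⟨hs, hsr⟩) hsm
            (fun y hy => hnfb y (Finset.filter_subset _ _ hy)) hproj
      _ ≤ alpha S * |r - s| :=
          mul_le_mul_of_nonneg_right (alpha_mono (Finset.filter_subset _ _)) (abs_nonneg _)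

end IsPTCPSplit

namespace IsPTCP

variable {S : Finset ℝ} {f : ℝ → Finset ℝ → ℝ}

lemma surroundingChoice (hp : IsPTCP S f) : SurroundingChoice S f := by
  induction hp with
  | single s f h =>
    intro r F hF hne
    have hFs : ∀ y ∈ F, y = s := fun y hy => Finset.mem_singleton.mp (hF hy)
    obtain ⟨x, hx⟩ := hne
    obtain rfl := hFs x hx
    rw [h r F hF ⟨x, hx⟩]
    refine ⟨hx, ?_⟩
    split_ifs with hr
    · exact (hFs r hr).symm
    · rcases lt_or_gt_of_ne fun h : r = x => hr (h ▸ hx) with hrx | hxr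
      · exact Or.inr ⟨hrx, fun y hy => Or.inr (hFs y hy).ge⟩
      · exact Or.inl ⟨hxr, fun y hy => Or.inl (hFs y hy).le⟩
  | split S f f₁ f₂ sa sb hcard hsa hsb hlt hadj hmax h₁ h₂ hf ih₁ ih₂ =>
    have d : IsPTCPSplit S f f₁ f₂ sa sb := ⟨hcard, hsa, hsb, hlt, hadj, hmax, hf⟩
    intro r F hF hne
    by_cases hl : GoesLeft S sa sb r F
    · have hx := ih₁ r _ (Finset.filter_subset_filter _ hF) (d.left_nonempty_of_goesLeft hF hne hl)
      have hxa := (Finset.mem_filter.mp hx.1).2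
      rw [d.apply_of_goesLeft hF hne hl]
      refine hx.of_filter fun y hy hya => Or.inl (max_lt ?_ ?_)
      · exact d.lt_of_goesLeft hl hy ((hadj y (hF hy)).resolve_left hya)
      · linarith [(hadj y (hF hy)).resolve_left hya]
    · have hx := ih₂ r _ (Finset.filter_subset_filter _ hF) (right_nonempty_of_not_goesLeft hl)
      have hxb := (Finset.mem_filter.mp hx.1).2
      rw [d.apply_of_not_goesLeft hF hne hl]
      refine hx.of_filter fun y hy hyb => Or.inr (lt_min ?_ ?_)
      · exact d.lt_of_not_goesLeft hl hy ((hadj y (hF hy)).resolve_right hyb)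
      · linarith [(hadj y (hF hy)).resolve_right hyb]

lemma mem (hp : IsPTCP S f) {r : ℝ} {F : Finset ℝ} (hF : F ⊆ S) (hne : F.Nonempty) :
    f r F ∈ F :=
  (hp.surroundingChoice r F hF hne).1

lemma apply_eq_of_mem_uIcc (hp : IsPTCP S f) {r q : ℝ} {F : Finset ℝ} (hF : F ⊆ S)
    (hne : F.Nonempty) (hq : q ∈ Set.uIcc r (f r F)) : f q F = f r F := by
  induction hp generalizing r q F with
  | single s f h => rw [h r F hF hne, h q F hF hne]
  | split S f f₁ f₂ sa sb hcard hsa hsb hlt hadj hmax h₁ h₂ hf ih₁ ih₂ =>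
    have d : IsPTCPSplit S f f₁ f₂ sa sb := ⟨hcard, hsa, hsb, hlt, hadj, hmax, hf⟩
    have hqr := d.goesLeft_iff_of_mem_uIcc h₁.surroundingChoice h₂.surroundingChoice hF hne hq
    by_cases hl : GoesLeft S sa sb r F
    · rw [d.apply_of_goesLeft hF hne hl] at hq ⊢
      rw [d.apply_of_goesLeft hF hne (hqr.mpr hl)]
      exact ih₁ (Finset.filter_subset_filter _ hF) (d.left_nonempty_of_goesLeft hF hne hl) hq
    · rw [d.apply_of_not_goesLeft hF hne hl] at hq ⊢
      rw [d.apply_of_not_goesLeft hF hne (hqr.not.mpr hl)]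
      exact ih₂ (Finset.filter_subset_filter _ hF) (right_nonempty_of_not_goesLeft hl) hq

lemma faithful (hp : IsPTCP S f) : FaithfulC S f := by
  intro c σ τ hσ ⟨hlen, hτ, _⟩ i _
  unfold mtch
  rw [runC_eq_of_mem_uIcc (fun _ _ hF hne => hp.mem hF hne)
    (fun _ _ _ hF hne hq => hp.apply_eq_of_mem_uIcc hF hne hq) c σ τ hσ hlen hτ]

lemma surrOriented (hp : IsPTCP S f) : SurrOriented S f := by
  intro c σ hσ i hi
  rw [mtch, runC_getD c σ hi]
  exact hp.surroundingChoice _ _ (Finset.filter_subset _ _)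
    (freeAfter_runC_nonempty (fun _ _ hF hne => hp.mem hF hne) c σ hσ hi)

lemma hybridBound (hp : IsPTCP S f) : HybridBound S f := by
  induction hp with
  | single s₀ f h =>
    intro F r s hfin hF hs hsm
    have hF' : ∀ y ∈ F, y = s₀ := fun y hy => Finset.mem_singleton.mp (hF hy)
    exact absurd ((hF' s hs).trans (h r F hF ⟨s, hs⟩).symm) hsm
  | split S f f₁ f₂ sa sb hcard hsa hsb hlt hadj hmax h₁ h₂ hf ih₁ ih₂ =>
    exact IsPTCPSplit.hybridBound ⟨hcard, hsa, hsb, hlt, hadj, hmax, hf⟩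
      h₁.surroundingChoice h₂.surroundingChoice ih₁ ih₂

lemma merges_of_hybridData (hp : IsPTCP S f) {σ : List ℝ} (hσ : σ.length = S.card) {i : ℕ}
    (hi : 1 ≤ i) {s : ℝ} {tstar : ℕ} {a h : ℕ → ℝ} (hd : HybridData S f σ i s tstar a h) :
    Merges f ((freeAfter S c1 (runC S f c1 σ) i).erase (a i)) (a i) (h i) (h tstar) := by
  obtain ⟨hit, htS, -, -, hdiff, hmerge⟩ := hd
  set FA := freeAfter S c1 (runC S f c1 σ)
  set FH := freeAfter S c1 (hybridRun S f c1 σ i s)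
  have hFA : ∀ t < σ.length, FA (t + 1) = (FA t).erase (f (σ.getD t 0) (FA t)) :=
    fun t ht => freeAfter_runC_c1_succ σ ht
  have hFH : ∀ t, i ≤ t → t < σ.length → FH (t + 1) = (FH t).erase (f (σ.getD t 0) (FH t)) :=
    fun t hit ht => freeAfter_hybridRun_c1_succ hi (by omega) hit ht
  have hmem : ∀ {t} {E : Finset ℝ} {x}, E ⊆ S → x ∈ E → f (σ.getD t 0) E ∈ E :=
    fun hE hx => hp.mem hE ⟨_, hx⟩
  have hsub : ∀ {ms t}, freeAfter S c1 ms t ⊆ S := fun {_ _} => Finset.filter_subset _ _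
  refine Nat.decreasingInduction (motive := fun t _ => i ≤ t →
    Merges f ((FA t).erase (a t)) (a t) (h t) (h tstar)) (fun t ht ih hit' => ?_)
    (fun hit' => ?_) hit le_rfl
  · obtain ⟨hA, hH⟩ := hdiff t hit' ht.le
    obtain ⟨hA', hH'⟩ := hdiff (t + 1) (by omega) ht
    rw [hFA t (by omega), hFH t hit' (by omega)] at hA' hH'
    exact .of_sdiff_step (hmem hsub (Finset.mem_sdiff.mp (hA ▸ Finset.mem_singleton_self _)).1)
      (hmem hsub (Finset.mem_sdiff.mp (hH ▸ Finset.mem_singleton_self _)).1) hA hH hA' hH'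
      (by rw [← hFA t (by omega)]; exact ih (by omega))
  · obtain ⟨hA, hH⟩ := hdiff tstar hit' le_rfl
    refine .of_sdiff_of_erase_eq (q := σ.getD tstar 0) hA hH ?_
    rw [← hFA tstar (by omega), ← hFH tstar hit' (by omega)]
    exact hmerge (tstar + 1) le_rfl

lemma c3 (hp : IsPTCP S f) : C3 S f := by
  intro _ σ hσ i hi hiS s hs hsm hsurr tstar a h hd
  have hchain := hp.merges_of_hybridData hσ hi hd
  obtain ⟨-, -, hai, hhi, -, -⟩ := hd
  have hi' : i - 1 < σ.length := by omega
  set F := freeAfter S c1 (runC S f c1 σ) (i - 1)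
  set r := σ.getD (i - 1) 0
  have hm : mtch S f c1 σ (i - 1) = f r F := runC_getD c1 σ hi'
  have hFi : freeAfter S c1 (runC S f c1 σ) i = F.erase (f r F) := by
    have := freeAfter_runC_c1_succ (S := S) (f := f) σ hi'
    rwa [Nat.sub_add_cancel hi] at this
  rw [hai, hhi, hm, hFi] at hchain
  rw [hm] at hsm hsurr
  have hnfb : NoFreeBetween F s (f r F) := by
    rcases hsurr with hsurr | ⟨-, hnfb⟩
    · exact hsurr.noFreeBetween (hp.surroundingChoice r F (Finset.filter_subset _ _) ⟨s, hs⟩) hsm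
    · exact hnfb
  rw [hai]
  exact hp.hybridBound F r s (h tstar) (Finset.filter_subset _ _) hs hsm hnfb hchain

end IsPTCP

theorem ptcp_Cprop_general
    (S : Finset ℝ)
    (f : ℝ → Finset ℝ → ℝ) (hf : IsPTCP S f) :
    CProp S f :=
  ⟨hf.faithful, hf.surrOriented, hf.c3⟩

/-- For every server layout `S` on the line, `C(A*[S],S)`
holds: the PTCP algorithm is faithful, surrounding-oriented and satisfies (C3). -/
theorem ptcp_Cprop
    (S : Finset ℝ) (hS : S.Nonempty)
    (f : ℝ → Finset ℝ → ℝ) (hf : IsPTCP S f) :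
    CProp S f :=
  ptcp_Cprop_general S f hf

end OFAL
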